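/- arXiv:math/9906093 — 5 statements merged into one kernel-verified Lean document; each statement's English description precedes it below -/
import Mathlib

section
/- Let n ≥ 1 and let f(z) = ∑_{k=1}^{n} a_k z^{−k} with a_1, …, a_n ∈ ℂ (a rational function whose only pole is at 0 and which tends to 0 at infinity). Then for every γ ∈ (0, 2π), the symmetric limit lim_{M→∞} ∑_{1≤|m|≤M} e^{imγ} f(m) exists and equals −2πi · Res_{z=0} [ f(z) e^{iγz} / (e^{2πiz} − 1) ]. -/
/-!
The function `g z = f z * e^{iγz} / (e^{2πiz} - 1)` has a simple pole at each nonzero integer `m`,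
with residue `e^{imγ} f(m) / (2πi)`, and no singularity other than these and `0`. The residue
theorem on the annulus `r ≤ |z| ≤ M + 1/2` therefore writes the partial sum as
`∮_{|z| = M + 1/2} g - 2πi Res_{z=0} g`. On these circles `|z f(z)|` is bounded, while
`|e^{iγz} / (e^{2πiz} - 1)|` is bounded and decays like `e^{-min(γ, 2π - γ) |Im z|}`, a positive
rate because `0 < γ < 2π`; so the outer integral tends to `0` by dominated convergence.
-/

open Complex Filter Finset

/-- `R` is the residue of `g` at `c`: for all sufficiently small `r > 0`, the circle
integral of `g` over `|z - c| = r` equals `2πi·R`. -/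
def IsResidueAt (g : ℂ → ℂ) (c R : ℂ) : Prop :=
  ∃ ε > (0 : ℝ), ∀ r : ℝ, 0 < r → r < ε →
    (∮ z in C(c, r), g z) = 2 * Real.pi * Complex.I * R

open Metric Topology
open scoped Real

namespace circleIntegral

theorem integral_sub_inv_of_notMem_closedBall {c w : ℂ} {R : ℝ} (hR : 0 ≤ R)
    (hw : w ∉ closedBall c R) : (∮ z in C(c, R), (z - w)⁻¹) = 0 := by
  have hd : ∀ z ∈ closedBall c R, DifferentiableAt ℂ (fun z : ℂ => (z - w)⁻¹) z :=
    fun z hz => (differentiableAt_id.sub_const w).inv (sub_ne_zero.2 (ne_of_mem_of_not_mem hz hw))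
  exact Complex.circleIntegral_eq_zero_of_differentiable_on_off_countable hR Set.countable_empty
    (fun z hz => (hd z hz).continuousAt.continuousWithinAt)
    (fun z hz => hd z (ball_subset_closedBall hz.1))

theorem integral_sum_div_sub {c : ℂ} {R : ℝ} (hR : 0 ≤ R) {S : Finset ℂ}
    (hS : ∀ s ∈ S, ‖s - c‖ ≠ R) (a : ℂ → ℂ) :
    (∮ z in C(c, R), ∑ s ∈ S, a s / (z - s)) =
      2 * π * I * ∑ s ∈ S with ‖s - c‖ < R, a s := by
  have hint : ∀ s ∈ S, CircleIntegrable (fun z => (z - s)⁻¹) c R := fun s hs =>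
    circleIntegrable_sub_inv_iff.2 <| Or.inr <| by
      rw [mem_sphere, dist_eq_norm, abs_of_nonneg hR]; exact hS s hs
  simp_rw [div_eq_mul_inv]
  rw [integral_fun_sum (f := fun s z => a s * (z - s)⁻¹)
      fun s hs => (hint s hs).const_smul (a := a s), Finset.sum_filter, Finset.mul_sum]
  refine Finset.sum_congr rfl fun s hs => ?_
  rw [integral_const_mul]
  split_ifs with hlt
  · rw [integral_sub_inv_of_mem_ball (by rwa [mem_ball, dist_eq_norm])]; ring
  · rw [integral_sub_inv_of_notMem_closedBall hR, mul_zero, mul_zero]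
    rw [mem_closedBall, dist_eq_norm]
    exact fun hle => hlt (lt_of_le_of_ne hle (hS s hs))

end circleIntegral

theorem norm_deriv_circleMap_smul (g : ℂ → ℂ) (c : ℂ) (R θ : ℝ) :
    ‖deriv (circleMap c R) θ • g (circleMap c R θ)‖ =
      ‖circleMap c R θ - c‖ * ‖g (circleMap c R θ)‖ := by
  rw [deriv_circleMap, circleMap_sub_center, norm_smul, norm_mul, norm_I, mul_one]

theorem tendsto_circleIntegral_of_dominated {ι : Type*} {l : Filter ι} [l.IsCountablyGenerated]
    {g : ℂ → ℂ} {c : ℂ} {ρ : ι → ℝ} {C : ℝ} (hint : ∀ᶠ i in l, CircleIntegrable g c (ρ i))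
    (hbound : ∀ᶠ i in l, ∀ z ∈ sphere c |ρ i|, ‖z - c‖ * ‖g z‖ ≤ C)
    (hlim : ∀ᵐ θ, Tendsto (fun i => ‖circleMap c (ρ i) θ - c‖ * ‖g (circleMap c (ρ i) θ)‖) l
      (𝓝 0)) :
    Tendsto (fun i => ∮ z in C(c, ρ i), g z) l (𝓝 0) := by
  have h := intervalIntegral.tendsto_integral_filter_of_dominated_convergence (a := 0) (b := 2 * π)
    (F := fun i θ => deriv (circleMap c (ρ i)) θ • g (circleMap c (ρ i) θ)) (f := fun _ => 0)
    (fun _ => C) (hint.mono fun i hi => hi.out.def'.aestronglyMeasurable)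
    (hbound.mono fun i hi => Eventually.of_forall fun θ _ => by
      rw [norm_deriv_circleMap_smul]; exact hi _ (circleMap_mem_sphere' c (ρ i) θ))
    intervalIntegrable_const
    (hlim.mono fun θ hθ _ => tendsto_zero_iff_norm_tendsto_zero.2 <| by
      simpa only [norm_deriv_circleMap_smul] using hθ)
  rw [intervalIntegral.integral_zero] at h
  exact h

/-- `g` has at most a simple pole at `s`, with residue `h s`. -/
def HasSimplePoleAt (g h : ℂ → ℂ) (s : ℂ) : Prop :=
  (∀ᶠ z in 𝓝 s, DifferentiableAt ℂ h z) ∧ ∀ᶠ z in 𝓝[≠] s, g z = h z / (z - s)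

section SimplePoles

variable {g : ℂ → ℂ} {S : Finset ℂ} {h : ℂ → ℂ → ℂ}

/-- At `z = s ∈ S` the term `h s s / (z - s)` of the principal part is `0` by the convention
`x / 0 = 0`, and the value `deriv (h s) s = dslope (h s) s s` fills in the removable
singularity. -/
noncomputable def removePoles (g : ℂ → ℂ) (S : Finset ℂ) (h : ℂ → ℂ → ℂ) (z : ℂ) : ℂ :=
  (if z ∈ S then deriv (h z) z else g z) - ∑ s ∈ S, h s s / (z - s)

theorem differentiableAt_sum_div_sub {T : Finset ℂ} (a : ℂ → ℂ) {z : ℂ} (hz : z ∉ T) :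
    DifferentiableAt ℂ (fun w => ∑ t ∈ T, a t / (w - t)) z :=
  DifferentiableAt.fun_sum fun t ht => (differentiableAt_const _).div
    (differentiableAt_id.sub_const t) (sub_ne_zero.2 (ne_of_mem_of_not_mem ht hz).symm)

theorem removePoles_eventuallyEq_of_mem {s : ℂ} (hs : s ∈ S)
    (hpole : ∀ᶠ z in 𝓝[≠] s, g z = h s z / (z - s)) :
    removePoles g S h =ᶠ[𝓝 s] fun w => dslope (h s) s w - ∑ t ∈ S.erase s, h t t / (w - t) := by
  have hsplit : ∀ w, ∑ t ∈ S, h t t / (w - t) =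
      h s s / (w - s) + ∑ t ∈ S.erase s, h t t / (w - t) :=
    fun w => (Finset.add_sum_erase S _ hs).symm
  have hfar : ((S.erase s : Finset ℂ) : Set ℂ)ᶜ ∈ 𝓝 s :=
    (S.erase s).finite_toSet.isClosed.isOpen_compl.mem_nhds (by simp)
  filter_upwards [hfar, eventually_nhdsWithin_iff.1 hpole] with w hw hgw
  rcases eq_or_ne w s with rfl | hne
  · rw [removePoles, if_pos hs, hsplit, sub_self, div_zero, zero_add, dslope_same]
  · have hwS : w ∉ S := fun h => hw (Finset.mem_erase.2 ⟨hne, h⟩)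
    rw [removePoles, if_neg hwS, hsplit, hgw hne, dslope_of_ne _ hne, slope_def_field]
    ring

theorem differentiableAt_removePoles {z : ℂ} (hpole : z ∈ S → HasSimplePoleAt g (h z) z)
    (hg : z ∉ S → DifferentiableAt ℂ g z) : DifferentiableAt ℂ (removePoles g S h) z := by
  by_cases hz : z ∈ S
  · rw [(removePoles_eventuallyEq_of_mem hz (hpole hz).2).differentiableAt_iff]
    obtain ⟨U, hU, hdU⟩ : ∃ U ∈ 𝓝 z, DifferentiableOn ℂ (h z) U :=
      ⟨_, (hpole hz).1, fun w hw => DifferentiableAt.differentiableWithinAt hw⟩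
    exact (((differentiableOn_dslope hU).2 hdU).differentiableAt hU).sub
      (differentiableAt_sum_div_sub _ (Finset.notMem_erase z S))
  · have hfar : (S : Set ℂ)ᶜ ∈ 𝓝 z := S.finite_toSet.isClosed.isOpen_compl.mem_nhds hz
    have heq : removePoles g S h =ᶠ[𝓝 z] fun w => g w - ∑ s ∈ S, h s s / (w - s) := by
      filter_upwards [hfar] with w hw
      rw [removePoles, if_neg (show w ∉ S from hw)]
    rw [heq.differentiableAt_iff]
    exact (hg hz).sub (differentiableAt_sum_div_sub _ hz)

theorem circleIntegral_removePoles {c : ℂ} {R : ℝ} (hR : 0 ≤ R) (hS : ∀ s ∈ S, ‖s - c‖ ≠ R)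
    (hg : CircleIntegrable g c R) :
    (∮ z in C(c, R), removePoles g S h z) =
      (∮ z in C(c, R), g z) - 2 * π * I * ∑ s ∈ S with ‖s - c‖ < R, h s s := by
  have hP : CircleIntegrable (fun z => ∑ s ∈ S, h s s / (z - s)) c R := by
    refine ContinuousOn.circleIntegrable hR fun z hz => ?_
    refine (differentiableAt_sum_div_sub _ fun hzS => hS z hzS ?_).continuousAt.continuousWithinAt
    rwa [mem_sphere, dist_eq_norm] at hz
  rw [← circleIntegral.integral_sum_div_sub hR hS, ← circleIntegral.integral_sub hg hP]
  refine circleIntegral.integral_congr hR fun z hz => ?_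
  have hzS : z ∉ S := fun hzS => hS z hzS (by rwa [mem_sphere, dist_eq_norm] at hz)
  simp only [removePoles, if_neg hzS]

theorem circleIntegral_sub_circleIntegral_eq_sum_residues {c : ℂ} {r ρ : ℝ} (hr : 0 < r)
    (hrρ : r ≤ ρ) (hS : ∀ s ∈ S, r < ‖s - c‖ ∧ ‖s - c‖ < ρ)
    (hg : ∀ z, r ≤ ‖z - c‖ → ‖z - c‖ ≤ ρ → z ∉ S → DifferentiableAt ℂ g z)
    (hpole : ∀ s ∈ S, HasSimplePoleAt g (h s) s) :
    (∮ z in C(c, ρ), g z) - (∮ z in C(c, r), g z) = 2 * π * I * ∑ s ∈ S, h s s := by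
  have hH : ∀ z, r ≤ ‖z - c‖ → ‖z - c‖ ≤ ρ → DifferentiableAt ℂ (removePoles g S h) z :=
    fun z hr hρ => differentiableAt_removePoles (hpole z) (hg z hr hρ)
  have hannulus := Complex.circleIntegral_eq_of_differentiable_on_annulus_off_countable hr hrρ
    Set.countable_empty (f := removePoles g S h)
    (fun z hz => by
      simp only [Set.mem_sdiff, mem_closedBall, mem_ball, dist_eq_norm, not_lt] at hz
      exact (hH z hz.2 hz.1).continuousAt.continuousWithinAt)
    (fun z hz => by
      simp only [Set.sdiff_empty, Set.mem_sdiff, mem_ball, mem_closedBall, dist_eq_norm,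
        not_le] at hz
      exact hH z hz.2.le hz.1.le)
  have hcircle : ∀ R, r ≤ R → R ≤ ρ → (∀ s ∈ S, ‖s - c‖ ≠ R) →
      (∮ z in C(c, R), removePoles g S h z) =
        (∮ z in C(c, R), g z) - 2 * π * I * ∑ s ∈ S with ‖s - c‖ < R, h s s :=
    fun R hrR hRρ hSR => circleIntegral_removePoles (hr.le.trans hrR) hSR <|
      ContinuousOn.circleIntegrable (hr.le.trans hrR) fun z hz => by
        rw [mem_sphere, dist_eq_norm] at hz
        exact (hg z (hz ▸ hrR) (hz ▸ hRρ) fun hzS => hSR z hzS hz).continuousAt.continuousWithinAt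
  rw [hcircle ρ hrρ le_rfl fun s hs => (hS s hs).2.ne,
    hcircle r le_rfl hrρ fun s hs => (hS s hs).1.ne',
    Finset.filter_true_of_mem fun s hs => (hS s hs).2,
    Finset.filter_false_of_mem fun s hs => not_lt.2 (hS s hs).1.le] at hannulus
  rw [Finset.sum_empty] at hannulus
  linear_combination hannulus

end SimplePoles

noncomputable def expTwoPiSubOne (z : ℂ) : ℂ := cexp (2 * π * I * z) - 1

theorem differentiable_expTwoPiSubOne : Differentiable ℂ expTwoPiSubOne :=
  ((differentiable_id.const_mul _).cexp).sub_const 1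

theorem expTwoPiSubOne_eq_zero_iff {z : ℂ} : expTwoPiSubOne z = 0 ↔ ∃ m : ℤ, z = m := by
  rw [expTwoPiSubOne, sub_eq_zero, Complex.exp_eq_one_iff]
  refine exists_congr fun m => ⟨fun h => mul_left_cancel₀ two_pi_I_ne_zero ?_, fun h => ?_⟩
  · linear_combination h
  · rw [h]; ring

theorem expTwoPiSubOne_ne_zero_of_norm_eq {M : ℕ} {z : ℂ} (hz : ‖z‖ = M + 1 / 2) :
    expTwoPiSubOne z ≠ 0 := fun hD => by
  obtain ⟨k, rfl⟩ := expTwoPiSubOne_eq_zero_iff.1 hD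
  have h : ((2 * |k| : ℤ) : ℝ) = ((2 * M + 1 : ℤ) : ℝ) := by
    push_cast; rw [← Complex.norm_intCast, hz]; ring
  have h' : 2 * |k| = 2 * (M : ℤ) + 1 := by exact_mod_cast h
  omega

theorem expTwoPiSubOne_sub_intCast (z : ℂ) (m : ℤ) : expTwoPiSubOne (z - m) = expTwoPiSubOne z := by
  rw [expTwoPiSubOne, expTwoPiSubOne, mul_sub, Complex.exp_sub, mul_comm _ (m : ℂ),
    Complex.exp_int_mul_two_pi_mul_I, div_one]

theorem expTwoPiSubOne_eq_mul_dslope (m : ℤ) (z : ℂ) :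
    expTwoPiSubOne z = (z - m) * dslope expTwoPiSubOne 0 (z - m) := by
  have h := sub_smul_dslope expTwoPiSubOne 0 (z - m)
  rw [sub_zero, smul_eq_mul, expTwoPiSubOne_sub_intCast] at h
  have h0 : expTwoPiSubOne 0 = 0 := by simp [expTwoPiSubOne]
  rw [h, h0, sub_zero]

theorem dslope_expTwoPiSubOne_zero : dslope expTwoPiSubOne 0 0 = 2 * π * I := by
  have h : HasDerivAt (fun z => cexp (2 * π * I * z) - 1) (2 * π * I) 0 := by
    simpa using ((hasDerivAt_id (0 : ℂ)).const_mul (2 * π * I)).cexp.sub_const 1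
  exact (dslope_same _ _).trans h.deriv

theorem differentiable_dslope_expTwoPiSubOne : Differentiable ℂ (dslope expTwoPiSubOne 0) :=
  fun _ => ((differentiableOn_dslope Filter.univ_mem).2
    differentiable_expTwoPiSubOne.differentiableOn).differentiableAt Filter.univ_mem

theorem eventually_differentiableAt_div_dslope_expTwoPiSubOne {q : ℂ → ℂ} (m : ℤ)
    (hq : ∀ᶠ z in 𝓝 (m : ℂ), DifferentiableAt ℂ q z) :
    ∀ᶠ z in 𝓝 (m : ℂ), DifferentiableAt ℂ (fun z => q z / dslope expTwoPiSubOne 0 (z - m)) z := by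
  have hE : Continuous fun z : ℂ => dslope expTwoPiSubOne 0 (z - m) :=
    differentiable_dslope_expTwoPiSubOne.continuous.comp (continuous_sub_right _)
  have hE0 : dslope expTwoPiSubOne 0 ((m : ℂ) - m) ≠ 0 := by
    rw [sub_self, dslope_expTwoPiSubOne_zero]; exact two_pi_I_ne_zero
  filter_upwards [hE.continuousAt.eventually_ne hE0, hq] with z hEz hqz
  exact hqz.div ((differentiable_dslope_expTwoPiSubOne.comp (differentiable_id.sub_const _)) z) hEz

theorem sum_eq_circleIntegral_div_expTwoPiSubOne_sub {q : ℂ → ℂ}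
    (hq : DifferentiableOn ℂ q {0}ᶜ) {r : ℝ} (hr₀ : 0 < r) (hr : r ≤ 1 / 2) (M : ℕ) :
    ∑ m ∈ (Icc (-(M : ℤ)) M).filter (· ≠ 0), q m =
      (∮ z in C(0, M + 1 / 2), q z / expTwoPiSubOne z) -
        ∮ z in C(0, r), q z / expTwoPiSubOne z := by
  set S := ((Icc (-(M : ℤ)) M).filter (· ≠ 0)).image (Int.cast : ℤ → ℂ)
  have hqz : ∀ z ≠ 0, DifferentiableAt ℂ q z := fun z hz =>
    hq.differentiableAt (isOpen_compl_singleton.mem_nhds hz)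
  have hnorm : ∀ m : ℤ, ‖(m : ℂ)‖ = |(m : ℝ)| := fun m => by simp
  have hS : ∀ s ∈ S, r < ‖s - 0‖ ∧ ‖s - 0‖ < M + 1 / 2 := by
    simp only [S, Finset.mem_image, Finset.mem_filter, Finset.mem_Icc, sub_zero]
    rintro _ ⟨m, ⟨hmM, hm0⟩, rfl⟩
    have h1 : (1 : ℝ) ≤ |(m : ℝ)| := by exact_mod_cast Int.one_le_abs hm0
    have h2 : |(m : ℝ)| ≤ M := by exact_mod_cast abs_le.2 hmM
    rw [hnorm]; constructor <;> linarith
  have hg : ∀ z, r ≤ ‖z - 0‖ → ‖z - 0‖ ≤ M + 1 / 2 → z ∉ S →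
      DifferentiableAt ℂ (fun z => q z / expTwoPiSubOne z) z := by
    intro z hrz hzM hzS
    rw [sub_zero] at hrz hzM
    have hz0 : z ≠ 0 := ne_zero_of_norm_ne_zero (by linarith)
    refine (hqz z hz0).div (differentiable_expTwoPiSubOne z) fun hD => hzS ?_
    obtain ⟨m, rfl⟩ := expTwoPiSubOne_eq_zero_iff.1 hD
    have hm : |m| < (M : ℤ) + 1 := by
      rw [← Int.cast_lt (R := ℝ)]; push_cast; rw [← hnorm]; linarith
    refine Finset.mem_image_of_mem _ (Finset.mem_filter.2 ⟨Finset.mem_Icc.2 (abs_le.1 ?_), ?_⟩)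
    · exact Int.lt_add_one_iff.1 hm
    · rintro rfl; exact hz0 Int.cast_zero
  have hpole : ∀ s ∈ S,
      HasSimplePoleAt (fun z => q z / expTwoPiSubOne z)
        (fun z => q z / dslope expTwoPiSubOne 0 (z - s)) s := by
    simp only [S, Finset.mem_image, Finset.mem_filter]
    rintro _ ⟨m, ⟨-, hm0⟩, rfl⟩
    refine ⟨eventually_differentiableAt_div_dslope_expTwoPiSubOne m ?_,
      Eventually.of_forall fun z => ?_⟩
    · filter_upwards [isOpen_compl_singleton.mem_nhds (Int.cast_ne_zero.2 hm0 : (m : ℂ) ≠ 0)]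
        with z hz0 using hqz z hz0
    · dsimp only
      rw [expTwoPiSubOne_eq_mul_dslope m z, div_div, mul_comm]
  have hres := circleIntegral_sub_circleIntegral_eq_sum_residues hr₀
    (by linarith [M.cast_nonneg (α := ℝ)]) hS hg hpole
  rw [Finset.sum_image fun _ _ _ _ h => Int.cast_injective h] at hres
  simp only [sub_self, dslope_expTwoPiSubOne_zero] at hres
  rw [hres, Finset.mul_sum]
  exact Finset.sum_congr rfl fun m _ => by field_simp [two_pi_I_ne_zero]

theorem norm_cexp_two_pi_I_mul (z : ℂ) : ‖cexp (2 * π * I * z)‖ = Real.exp (-(2 * π * z.im)) := by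
  rw [Complex.norm_exp]; congr 1; simp

theorem norm_cexp_I_mul (γ : ℝ) (z : ℂ) : ‖cexp (I * γ * z)‖ = Real.exp (-(γ * z.im)) := by
  rw [Complex.norm_exp]; congr 1; simp

/-- On the circle `‖z‖ = M + 1/2` near the real axis, `Re z` lies within `1/4` of a half-integer,
so `Re (e^{2πiz}) ≤ 0`. -/
theorem one_le_norm_expTwoPiSubOne {M : ℕ} {z : ℂ} (hz : ‖z‖ = M + 1 / 2) (hy : |z.im| ≤ 1 / 4) :
    1 ≤ ‖expTwoPiSubOne z‖ := by
  have hsq : z.re ^ 2 + z.im ^ 2 = (M + 1 / 2) ^ 2 := by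
    rw [← hz, ← Complex.normSq_eq_norm_sq, Complex.normSq_apply]; ring
  have hy2 : z.im ^ 2 ≤ 1 / 16 := by nlinarith [sq_abs z.im, abs_nonneg z.im]
  have hM : (0 : ℝ) ≤ M := M.cast_nonneg
  have hlo : M + 1 / 4 ≤ |z.re| := by nlinarith [sq_abs z.re, abs_nonneg z.re]
  have hhi : |z.re| ≤ M + 1 / 2 := by nlinarith [sq_abs z.re, abs_nonneg z.re, sq_nonneg z.im]
  have hcos : Real.cos (2 * π * z.re) ≤ 0 := by
    rw [← Real.cos_abs, abs_mul, abs_of_pos Real.two_pi_pos,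
      show 2 * π * |z.re| = 2 * π * (|z.re| - M) + M * (2 * π) by ring, Real.cos_add_nat_mul_two_pi]
    apply Real.cos_nonpos_of_pi_div_two_le_of_le <;> nlinarith [Real.pi_pos]
  have hre : (expTwoPiSubOne z).re ≤ -1 := by
    have : (expTwoPiSubOne z).re = Real.exp (-(2 * π * z.im)) * Real.cos (2 * π * z.re) - 1 := by
      simp [expTwoPiSubOne, Complex.exp_re]
    nlinarith [Real.exp_pos (-(2 * π * z.im))]
  calc (1 : ℝ) ≤ |(expTwoPiSubOne z).re| := by rw [abs_of_neg (by linarith)]; linarith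
    _ ≤ ‖expTwoPiSubOne z‖ := Complex.abs_re_le_norm _

/-- The rate `min γ (2π - γ)` comes from `Im z → +∞`, where `|e^{iγz}| = e^{-γ Im z}`, and from
`Im z → -∞`, where `|e^{2πiz} - 1| ≈ e^{-2π Im z}`. -/
theorem norm_cexp_le_mul_norm_expTwoPiSubOne (γ : ℝ) {z : ℂ} (hy : 1 / 4 ≤ |z.im|) :
    ‖cexp (I * γ * z)‖ ≤
      Real.exp (-min γ (2 * π - γ) * |z.im|) / (1 - Real.exp (-(π / 2))) * ‖expTwoPiSubOne z‖ := by
  have hπ := Real.pi_pos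
  have hc : 0 < 1 - Real.exp (-(π / 2)) := sub_pos.2 (Real.exp_lt_one_iff.2 (by linarith))
  have hD : |Real.exp (-(2 * π * z.im)) - 1| ≤ ‖expTwoPiSubOne z‖ := by
    have := abs_norm_sub_norm_le (cexp (2 * π * I * z)) 1
    rwa [norm_cexp_two_pi_I_mul, norm_one] at this
  rw [norm_cexp_I_mul, div_mul_eq_mul_div, le_div_iff₀ hc]
  refine le_trans ?_ (mul_le_mul_of_nonneg_left hD (Real.exp_pos _).le)
  rcases le_or_gt 0 z.im with hy0 | hy0
  · rw [abs_of_nonneg hy0] at hy ⊢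
    have h1 : Real.exp (-(2 * π * z.im)) ≤ Real.exp (-(π / 2)) := Real.exp_le_exp.2 (by nlinarith)
    have h2 : Real.exp (-(γ * z.im)) ≤ Real.exp (-min γ (2 * π - γ) * z.im) :=
      Real.exp_le_exp.2 (by nlinarith [min_le_left γ (2 * π - γ)])
    rw [abs_of_nonpos (by linarith [Real.exp_pos (-(π / 2))])]
    exact mul_le_mul h2 (by linarith) hc.le (Real.exp_pos _).le
  · rw [abs_of_neg hy0] at hy ⊢
    have h1 : 1 ≤ Real.exp (-(2 * π * z.im)) * Real.exp (-(π / 2)) := by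
      rw [← Real.exp_add]; exact Real.one_le_exp (by nlinarith)
    have h2 : Real.exp (-(γ * z.im)) ≤
        Real.exp (-min γ (2 * π - γ) * -z.im) * Real.exp (-(2 * π * z.im)) := by
      rw [← Real.exp_add]; exact Real.exp_le_exp.2 (by nlinarith [min_le_right γ (2 * π - γ)])
    rw [abs_of_nonneg (sub_nonneg.2 (Real.one_le_exp (by nlinarith)))]
    nlinarith [Real.exp_pos (-min γ (2 * π - γ) * -z.im), Real.exp_pos (-(γ * z.im))]

theorem circleIntegrable_div_expTwoPiSubOne {q : ℂ → ℂ} (hq : DifferentiableOn ℂ q {0}ᶜ)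
    (M : ℕ) : CircleIntegrable (fun z => q z / expTwoPiSubOne z) 0 (M + 1 / 2) := by
  refine ContinuousOn.circleIntegrable (by positivity) fun z hz => ?_
  rw [mem_sphere, dist_zero_right] at hz
  have hz0 : z ≠ 0 := ne_zero_of_norm_ne_zero (by rw [hz]; positivity)
  exact ((hq.differentiableAt (isOpen_compl_singleton.mem_nhds hz0)).div
    (differentiable_expTwoPiSubOne z) (expTwoPiSubOne_ne_zero_of_norm_eq hz)).continuousAt
    |>.continuousWithinAt

theorem norm_cexp_div_norm_expTwoPiSubOne_le {γ : ℝ} (hγ₀ : 0 ≤ γ) (hγ₁ : γ ≤ 2 * π) {M : ℕ}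
    {z : ℂ} (hz : ‖z‖ = M + 1 / 2) :
    ‖cexp (I * γ * z)‖ / ‖expTwoPiSubOne z‖ ≤
      max (Real.exp γ) (1 - Real.exp (-(π / 2)))⁻¹ := by
  have hc : 0 < 1 - Real.exp (-(π / 2)) :=
    sub_pos.2 (Real.exp_lt_one_iff.2 (by linarith [Real.pi_pos]))
  refine div_le_of_le_mul₀ (norm_nonneg _) (by positivity) ?_
  rcases le_total |z.im| (1 / 4) with hy | hy
  · calc ‖cexp (I * γ * z)‖ ≤ Real.exp γ * 1 := by
          rw [norm_cexp_I_mul, mul_one, Real.exp_le_exp]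
          nlinarith [neg_abs_le z.im, abs_nonneg z.im]
      _ ≤ _ := mul_le_mul (le_max_left _ _) (one_le_norm_expTwoPiSubOne hz hy) zero_le_one
          (by positivity)
  · refine (norm_cexp_le_mul_norm_expTwoPiSubOne γ hy).trans
      (mul_le_mul_of_nonneg_right ?_ (norm_nonneg _))
    rw [div_eq_mul_inv]
    refine (mul_le_of_le_one_left (inv_nonneg.2 hc.le) ?_).trans (le_max_right _ _)
    exact Real.exp_le_one_iff.2 (by nlinarith [abs_nonneg z.im, le_min hγ₀ (sub_nonneg.2 hγ₁)])

theorem ae_sin_ne_zero : ∀ᵐ θ : ℝ, Real.sin θ ≠ 0 :=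
  ((Set.countable_range fun n : ℤ => (n : ℝ) * π).ae_notMem _).mono fun _ hθ h0 =>
    hθ (Real.sin_eq_zero_iff.1 h0)

theorem tendsto_circleIntegral_mul_cexp_div_expTwoPiSubOne {γ : ℝ} (hγ₀ : 0 < γ)
    (hγ₁ : γ < 2 * π) {f : ℂ → ℂ} (hf : DifferentiableOn ℂ f {0}ᶜ) {C : ℝ}
    (hfC : ∀ z, 1 ≤ ‖z‖ → ‖z‖ * ‖f z‖ ≤ C) :
    Tendsto (fun M : ℕ => ∮ z in C(0, M + 1 / 2), f z * cexp (I * γ * z) / expTwoPiSubOne z)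
      atTop (𝓝 0) := by
  have hδ : 0 < min γ (2 * π - γ) := lt_min hγ₀ (by linarith)
  have hc : 0 < 1 - Real.exp (-(π / 2)) :=
    sub_pos.2 (Real.exp_lt_one_iff.2 (by linarith [Real.pi_pos]))
  have hC : 0 ≤ C := le_trans (by positivity) (hfC 1 (by simp))
  have hg : ∀ z, 1 ≤ ‖z‖ → ‖z‖ * ‖f z * cexp (I * γ * z) / expTwoPiSubOne z‖ ≤
      C * (‖cexp (I * γ * z)‖ / ‖expTwoPiSubOne z‖) := fun z hz => by
    rw [norm_div, norm_mul, mul_div_assoc, ← mul_assoc]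
    exact mul_le_mul_of_nonneg_right (hfC z hz) (by positivity)
  refine tendsto_circleIntegral_of_dominated
    (C := C * max (Real.exp γ) (1 - Real.exp (-(π / 2)))⁻¹)
    (Eventually.of_forall (circleIntegrable_div_expTwoPiSubOne
      (q := fun z => f z * cexp (I * γ * z))
      (hf.mul (differentiable_id.const_mul _).cexp.differentiableOn)))
    ((eventually_ge_atTop 1).mono fun M hM z hz => ?_) (ae_sin_ne_zero.mono fun θ hθ => ?_)
  · rw [mem_sphere, dist_zero_right, abs_of_pos (by positivity)] at hz
    have h1 : (1 : ℝ) ≤ M := by exact_mod_cast hM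
    rw [sub_zero]
    exact (hg z (by linarith)).trans (mul_le_mul_of_nonneg_left
      (norm_cexp_div_norm_expTwoPiSubOne_le hγ₀.le hγ₁.le hz) hC)
  · have hR : Tendsto (fun M : ℕ => ((M : ℝ) + 1 / 2) * |Real.sin θ|) atTop atTop :=
      (tendsto_natCast_atTop_atTop.atTop_add tendsto_const_nhds).atTop_mul_const (abs_pos.2 hθ)
    have hexp : Tendsto (fun M : ℕ => C * (Real.exp (-min γ (2 * π - γ) *
        (((M : ℝ) + 1 / 2) * |Real.sin θ|)) / (1 - Real.exp (-(π / 2))))) atTop (𝓝 0) := by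
      simpa using ((Real.tendsto_exp_atBot.comp
        (hR.const_mul_atTop_of_neg (neg_neg_of_pos hδ))).div_const _).const_mul C
    refine squeeze_zero' (Eventually.of_forall fun M => by positivity) ?_ hexp
    filter_upwards [eventually_ge_atTop 1, hR.eventually_ge_atTop (1 / 4)] with M hM hy
    set z := circleMap 0 ((M : ℝ) + 1 / 2) θ
    have hz : ‖z‖ = M + 1 / 2 := by rw [norm_circleMap_zero, abs_of_pos (by positivity)]
    have him : |z.im| = ((M : ℝ) + 1 / 2) * |Real.sin θ| := by
      rw [show z.im = ((M : ℝ) + 1 / 2) * Real.sin θ by simp [z, circleMap, Complex.exp_im],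
        abs_mul, abs_of_pos (by positivity : (0 : ℝ) < M + 1 / 2)]
    have h1 : (1 : ℝ) ≤ M := by exact_mod_cast hM
    rw [sub_zero]
    refine (hg z (by linarith)).trans (mul_le_mul_of_nonneg_left ?_ hC)
    refine div_le_of_le_mul₀ (norm_nonneg _) (by positivity) ?_
    rw [← him]
    exact norm_cexp_le_mul_norm_expTwoPiSubOne γ (him ▸ hy)

theorem norm_mul_norm_sum_mul_zpow_neg_le (n : ℕ) (a : ℕ → ℂ) {z : ℂ} (hz : 1 ≤ ‖z‖) :
    ‖z‖ * ‖∑ k ∈ Icc 1 n, a k * z ^ (-(k : ℤ))‖ ≤ ∑ k ∈ Icc 1 n, ‖a k‖ := by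
  refine (mul_le_mul_of_nonneg_left (norm_sum_le _ _) (norm_nonneg z)).trans ?_
  rw [Finset.mul_sum]
  refine Finset.sum_le_sum fun k hk => ?_
  have hk : 1 ≤ k := (Finset.mem_Icc.1 hk).1
  have hpow : ‖z‖ * ‖z‖ ^ (-(k : ℤ)) ≤ 1 := by
    rw [← zpow_one_add₀ (by positivity)]
    exact zpow_le_one_of_nonpos₀ hz (by omega)
  calc ‖z‖ * ‖a k * z ^ (-(k : ℤ))‖ = ‖a k‖ * (‖z‖ * ‖z‖ ^ (-(k : ℤ))) := by
        rw [norm_mul, norm_zpow]; ring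
    _ ≤ ‖a k‖ := mul_le_of_le_one_right (norm_nonneg _) hpow

theorem statement0_general (n : ℕ) (a : ℕ → ℂ) (f : ℂ → ℂ)
    (hf : ∀ z : ℂ, f z = ∑ k ∈ Finset.Icc 1 n, a k * z ^ (-(k : ℤ)))
    (γ : ℝ) (hγ₀ : 0 < γ) (hγ₁ : γ < 2 * Real.pi) (R : ℂ)
    (hR : IsResidueAt (fun z : ℂ =>
      f z * Complex.exp (Complex.I * γ * z) /
        (Complex.exp (2 * Real.pi * Complex.I * z) - 1)) 0 R) :
    Tendsto (fun M : ℕ =>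
        ∑ m ∈ (Finset.Icc (-(M : ℤ)) (M : ℤ)).filter (· ≠ 0),
          Complex.exp (Complex.I * (m : ℂ) * γ) * f (m : ℂ))
      atTop (nhds (-(2 * Real.pi * Complex.I) * R)) := by
  have hfd : DifferentiableOn ℂ f {0}ᶜ := fun z hz => by
    rw [funext hf]
    exact (DifferentiableAt.fun_sum fun k _ =>
      (differentiableAt_const _).mul (differentiableAt_zpow.2 (Or.inl hz))).differentiableWithinAt
  have hqd : DifferentiableOn ℂ (fun z => f z * cexp (I * γ * z)) {0}ᶜ :=
    hfd.mul (differentiable_id.const_mul _).cexp.differentiableOn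
  obtain ⟨ε, hε, hres⟩ := hR
  have hr₀ : 0 < min (ε / 2) (1 / 2) := by positivity
  have hsmall : (∮ z in C(0, min (ε / 2) (1 / 2)), f z * cexp (I * γ * z) / expTwoPiSubOne z) =
      2 * π * I * R := hres _ hr₀ ((min_le_left _ _).trans_lt (by linarith))
  have hlim := (tendsto_circleIntegral_mul_cexp_div_expTwoPiSubOne hγ₀ hγ₁ hfd
    fun z hz => hf z ▸ norm_mul_norm_sum_mul_zpow_neg_le n a hz).sub_const (2 * π * I * R)
  rw [zero_sub, ← neg_mul] at hlim
  refine hlim.congr fun M => ?_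
  rw [← hsmall, ← sum_eq_circleIntegral_div_expTwoPiSubOne_sub hqd hr₀ (min_le_right _ _) M]
  exact Finset.sum_congr rfl fun m _ => by ring_nf

/-- Let `f(z) = ∑_{k=1}^n a_k z^{-k}` with `n ≥ 1`. For every `γ ∈ (0, 2π)`, the
symmetric limit `lim_{M→∞} ∑_{1≤|m|≤M} e^{imγ} f(m)` exists and equals
`-2πi · Res_{z=0} [f(z) e^{iγz} / (e^{2πiz} - 1)]`. -/
theorem statement0 (n : ℕ) (hn : 1 ≤ n) (a : ℕ → ℂ) (f : ℂ → ℂ)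
    (hf : ∀ z : ℂ, f z = ∑ k ∈ Finset.Icc 1 n, a k * z ^ (-(k : ℤ)))
    (γ : ℝ) (hγ₀ : 0 < γ) (hγ₁ : γ < 2 * Real.pi) (R : ℂ)
    (hR : IsResidueAt (fun z : ℂ =>
      f z * Complex.exp (Complex.I * γ * z) /
        (Complex.exp (2 * Real.pi * Complex.I * z) - 1)) 0 R) :
    Tendsto (fun M : ℕ =>
        ∑ m ∈ (Finset.Icc (-(M : ℤ)) (M : ℤ)).filter (· ≠ 0),
          Complex.exp (Complex.I * (m : ℂ) * γ) * f (m : ℂ))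
      atTop (nhds (-(2 * Real.pi * Complex.I) * R)) :=
  statement0_general n a f hf γ hγ₀ hγ₁ R hR
end

section
/- For every γ ∈ (0, 2π), the limit lim_{M→∞} ∑_{m=1}^{M} (e^{imγ} − e^{−imγ})/m exists and equals −2πi · Res_{z=0} [ e^{iγz} / (z (e^{2πiz} − 1)) ]. -/
open Complex Filter Finset

/-!
With `u = e^{iγ}` the partial sums are `∑_{m ≤ M} (u^m - ū^m)/m`. On the closed unit disc
minus `1` the series `∑ u^m/m` converges by Dirichlet's test, and Abel's limit theorem
identifies its sum with `-log (1 - u)`, the radial limit of the Taylor series. Hence the limit is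
`log (1 - ū) - log (1 - u) = -2i arg (1 - u) = i (π - γ)`.

For the residue, `e^{2πiz} - 1 = 2πiz · h(2πiz)` with `h = dslope exp 0` entire, `h 0 = 1`,
`h' 0 = 1/2` and `h` zero-free on `|w| < 2π`. So `z² g(z) = e^{iγz} / (2πi h(2πiz))` is
holomorphic on the unit disc and Cauchy's formula for the derivative gives
`R = (z² g)'(0) = γ/(2π) - 1/2`.
-/

open Topology ComplexConjugate Metric
open scoped Real

lemma exp_ne_one_of_norm_lt {w : ℂ} (hw₀ : w ≠ 0) (hw : ‖w‖ < 2 * π) : exp w ≠ 1 := by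
  rw [Ne, exp_eq_one_iff]
  rintro ⟨n, rfl⟩
  have hn : (1 : ℝ) ≤ |(n : ℝ)| := by
    exact_mod_cast Int.one_le_abs (by rintro rfl; simp at hw₀)
  simp only [norm_mul, norm_intCast, norm_ofNat, norm_real, norm_I, mul_one,
    Real.norm_of_nonneg Real.pi_pos.le] at hw
  nlinarith [Real.pi_pos]

lemma dslope_exp_zero_ne_zero {w : ℂ} (hw : ‖w‖ < 2 * π) : dslope exp 0 w ≠ 0 := by
  rcases eq_or_ne w 0 with rfl | hw₀
  · simp
  · rw [dslope_of_ne _ hw₀, slope_def_field, sub_zero, exp_zero]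
    exact div_ne_zero (sub_ne_zero.mpr (exp_ne_one_of_norm_lt hw₀ hw)) hw₀

lemma differentiable_dslope_exp_zero : Differentiable ℂ (dslope exp 0) := by
  rw [← differentiableOn_univ, Complex.differentiableOn_dslope univ_mem]
  exact differentiable_exp.differentiableOn

lemma hasDerivAt_dslope_exp_zero : HasDerivAt (dslope exp 0) (1 / 2) 0 := by
  rw [hasDerivAt_iff_isLittleO_nhds_zero]
  refine ((Asymptotics.isBigO_refl (fun w : ℂ ↦ w⁻¹) (𝓝 0)).mul_isLittleO
    (exp_sub_sum_range_succ_isLittleO_pow 2)).congr (fun w ↦ ?_) (fun w ↦ ?_)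
  · rcases eq_or_ne w 0 with rfl | hw
    · simp
    have htaylor : ∑ i ∈ range (2 + 1), w ^ i / (i.factorial : ℂ) = 1 + w + w ^ 2 / 2 := by
      norm_num [sum_range_succ]
    rw [htaylor, zero_add, dslope_same, dslope_of_ne _ hw, slope_def_field, Complex.deriv_exp,
      exp_zero]
    field_simp
    ring
  · rcases eq_or_ne w 0 with rfl | hw
    · simp
    · field_simp

lemma IsResidueAt.eq_deriv_of_eq_div_sq {g Q : ℂ → ℂ} {c R : ℂ} {ρ : ℝ}
    (hR : IsResidueAt g c R) (hρ : 0 < ρ) (hQ : DifferentiableOn ℂ Q (ball c ρ))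
    (hg : ∀ z ∈ ball c ρ, z ≠ c → g z = Q z / (z - c) ^ 2) :
    R = deriv Q c := by
  obtain ⟨ε, hε, hint⟩ := hR
  obtain ⟨r, hr, hrερ⟩ := exists_between (lt_min hε hρ)
  obtain ⟨hrε, hrρ⟩ := lt_min_iff.mp hrερ
  have hcauchy := (hQ.mono (closedBall_subset_ball hrρ)).deriv_eq_smul_circleIntegral hr
  rw [circleIntegral.integral_congr hr.le fun z hz ↦ ?_, hint r hr hrε, smul_eq_mul] at hcauchy
  · exact mul_left_cancel₀ two_pi_I_ne_zero hcauchy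
  · rw [hg z (sphere_subset_closedBall.trans (closedBall_subset_ball hrρ) hz)
      (ne_of_mem_sphere hz hr.ne'), smul_eq_mul, one_div, inv_mul_eq_div]

lemma IsResidueAt.eq_of_exp_div_mul_exp_sub_one {γ R : ℂ}
    (hR : IsResidueAt (fun z ↦ exp (I * γ * z) / (z * (exp (2 * π * I * z) - 1))) 0 R) :
    R = (γ - π) / (2 * π) := by
  set a : ℂ := 2 * π * I
  have ha : a ≠ 0 := two_pi_I_ne_zero
  set Q : ℂ → ℂ := fun z ↦ exp (I * γ * z) / (a * dslope exp 0 (a * z))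
  have hden : ∀ z ∈ ball (0 : ℂ) 1, a * dslope exp 0 (a * z) ≠ 0 := fun z hz ↦ by
    refine mul_ne_zero ha (dslope_exp_zero_ne_zero ?_)
    simp only [a, norm_mul, norm_ofNat, norm_real, Real.norm_of_nonneg Real.pi_pos.le, norm_I,
      mul_one]
    exact mul_lt_of_lt_one_right (by positivity) (by simpa using hz)
  have hQ : DifferentiableOn ℂ Q (ball 0 1) := fun z hz ↦ by
    have := differentiable_dslope_exp_zero
    exact (DifferentiableAt.div (c := fun z ↦ exp (I * γ * z))
      (d := fun z ↦ a * dslope exp 0 (a * z)) (by fun_prop) (by fun_prop)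
      (hden z hz)).differentiableWithinAt
  have hderiv : HasDerivAt Q ((γ - π) / (2 * π)) 0 := by
    have hnum : HasDerivAt (fun z ↦ exp (I * γ * z)) (I * γ) 0 := by
      simpa using ((hasDerivAt_id (0 : ℂ)).const_mul (I * γ)).cexp
    have hscale : HasDerivAt (fun z ↦ a * z) a 0 := by
      simpa using (hasDerivAt_id (0 : ℂ)).const_mul a
    have hdslope : HasDerivAt (dslope exp 0) (1 / 2) (a * 0) := by
      rw [mul_zero]; exact hasDerivAt_dslope_exp_zero
    refine (hnum.div ((hdslope.comp 0 hscale).const_mul a)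
      (hden 0 (mem_ball_self one_pos))).congr_deriv ?_
    simp only [Function.comp_apply, mul_zero, exp_zero, dslope_same, Complex.deriv_exp]
    field_simp
    ring
  rw [← hderiv.deriv]
  refine hR.eq_deriv_of_eq_div_sq one_pos hQ fun z _ hz₀ ↦ ?_
  have hexp := sub_smul_dslope exp 0 (a * z)
  rw [sub_zero, exp_zero, smul_eq_mul] at hexp
  simp only [Q, ← hexp, sub_zero]
  field_simp

lemma norm_sum_range_pow_succ_le {u : ℂ} (hu : ‖u‖ ≤ 1) (hu₁ : u ≠ 1) (n : ℕ) :
    ‖∑ i ∈ range n, u ^ (i + 1)‖ ≤ 2 / ‖u - 1‖ := by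
  simp_rw [pow_succ', ← mul_sum, geom_sum_eq hu₁, norm_mul, norm_div]
  have hpow : ‖u ^ n - 1‖ ≤ 2 := by
    calc ‖u ^ n - 1‖ ≤ ‖u ^ n‖ + ‖(1 : ℂ)‖ := norm_sub_le _ _
      _ ≤ 2 := by rw [norm_pow, norm_one]; linarith [pow_le_one₀ (norm_nonneg u) hu (n := n)]
  calc ‖u‖ * (‖u ^ n - 1‖ / ‖u - 1‖) ≤ 1 * (2 / ‖u - 1‖) := by gcongr
    _ = 2 / ‖u - 1‖ := one_mul _

lemma cauchySeq_sum_range_pow_div {u : ℂ} (hu : ‖u‖ ≤ 1) (hu₁ : u ≠ 1) :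
    CauchySeq fun n ↦ ∑ i ∈ range n, u ^ i / i := by
  rw [← cauchySeq_shift 1]
  have hanti : Antitone fun i : ℕ ↦ 1 / ((i : ℝ) + 1) := fun a b hab ↦ by
    dsimp only; gcongr
  convert hanti.cauchySeq_series_mul_of_tendsto_zero_of_bounded
    tendsto_one_div_add_atTop_nhds_zero_nat (norm_sum_range_pow_succ_le hu hu₁) using 2 with n
  rw [sum_range_succ']
  simp [div_eq_inv_mul, real_smul]

lemma one_sub_mem_slitPlane {u : ℂ} (hu : ‖u‖ ≤ 1) (hu₁ : u ≠ 1) :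
    1 - u ∈ slitPlane := by
  rw [mem_slitPlane_iff, sub_re, one_re, sub_im, one_im]
  by_contra! h
  have hre : u.re ≤ 1 := (re_le_norm u).trans hu
  exact hu₁ (Complex.ext (by simp; linarith) (by simp; linarith))

lemma tendsto_sum_range_pow_div {u : ℂ} (hu : ‖u‖ ≤ 1) (hu₁ : u ≠ 1) :
    Tendsto (fun n ↦ ∑ i ∈ range n, u ^ i / i) atTop (𝓝 (-log (1 - u))) := by
  obtain ⟨L, hL⟩ := cauchySeq_tendsto_of_complete (cauchySeq_sum_range_pow_div hu hu₁)
  have hcont : ContinuousAt (fun z : ℂ ↦ -log (1 - z * u)) 1 :=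
    ((continuousAt_clog (by simpa using one_sub_mem_slitPlane hu hu₁)).comp (by fun_prop)).neg
  have hofReal : Tendsto ofReal (𝓝[<] (1 : ℝ)) (𝓝 1) :=
    (continuous_ofReal.tendsto' 1 1 ofReal_one).mono_left nhdsWithin_le_nhds
  have hradial : Tendsto (fun z ↦ ∑' n : ℕ, u ^ n / n * z ^ n)
      ((𝓝[<] (1 : ℝ)).map ofReal) (𝓝 (-log (1 - u))) := by
    refine (one_mul u ▸ hcont.tendsto.mono_left hofReal).congr' ?_
    rw [EventuallyEq, eventually_map]
    filter_upwards [Ioo_mem_nhdsLT (show (-1 : ℝ) < 1 by norm_num)] with x hx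
    have hxu : ‖(x : ℂ) * u‖ < 1 := by
      rw [norm_mul, norm_real, Real.norm_eq_abs]
      nlinarith [abs_lt.mpr ⟨hx.1, hx.2⟩, norm_nonneg u, abs_nonneg x]
    simp only [← (hasSum_taylorSeries_neg_log hxu).tsum_eq, mul_pow]
    exact tsum_congr fun n ↦ by ring
  rwa [tendsto_nhds_unique (tendsto_tsum_powerSeries_nhdsWithin_lt hL) hradial] at hL

lemma tendsto_sum_Icc_pow_sub_conj_pow_div {u : ℂ} (hu : ‖u‖ ≤ 1) (hu₁ : u ≠ 1) :
    Tendsto (fun M : ℕ ↦ ∑ m ∈ Icc 1 M, (u ^ m - conj u ^ m) / (m : ℂ)) atTop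
      (𝓝 (-2 * arg (1 - u) * I)) := by
  have hconj : ‖conj u‖ ≤ 1 := by rwa [norm_conj]
  have hconj₁ : conj u ≠ 1 := fun h ↦ hu₁ (by simpa using congrArg conj h)
  have hsum := (tendsto_sum_range_pow_div hu hu₁).sub (tendsto_sum_range_pow_div hconj hconj₁)
  rw [← tendsto_add_atTop_iff_nat 1] at hsum
  have hlim : -log (1 - u) - -log (1 - conj u) = -2 * arg (1 - u) * I := by
    rw [show 1 - conj u = conj (1 - u) by simp,
      log_conj _ (slitPlane_arg_ne_pi (one_sub_mem_slitPlane hu hu₁)), neg_sub_neg, ← neg_sub,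
      sub_conj, log_im]
    push_cast
    ring
  rw [hlim] at hsum
  refine hsum.congr fun M ↦ ?_
  rw [← sum_sub_distrib, range_eq_Ico, sum_eq_sum_Ico_succ_bot (by omega : 0 < M + 1),
    Ico_add_one_right_eq_Icc]
  simp [sub_div]

lemma one_sub_exp_mul_I_eq (γ : ℝ) :
    1 - exp (γ * I) = (2 * Real.sin (γ / 2) : ℝ) * exp (((γ - π) / 2 : ℝ) * I) := by
  have hsplit : exp ((γ - π) / 2 * I) = exp (γ / 2 * I) * -I := by
    rw [← exp_neg_pi_div_two_mul_I, ← exp_add]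
    ring_nf
  have hsq : exp (γ * I) = exp (γ / 2 * I) ^ 2 := by
    rw [← exp_nat_mul]
    ring_nf
  have hinv : exp (-(γ / 2 * I)) * exp (γ / 2 * I) = 1 := by
    rw [← exp_add]
    simp
  push_cast
  rw [hsplit, hsq, sin, neg_mul]
  linear_combination -hinv + (exp (-(γ / 2 * I)) - exp (γ / 2 * I)) * exp (γ / 2 * I) * I_sq

lemma arg_one_sub_exp_mul_I {γ : ℝ} (h₀ : 0 < γ) (h₁ : γ < 2 * π) :
    arg (1 - exp (γ * I)) = (γ - π) / 2 := by
  have hsin : 0 < Real.sin (γ / 2) := Real.sin_pos_of_pos_of_lt_pi (by linarith) (by linarith)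
  rw [one_sub_exp_mul_I_eq, arg_real_mul _ (by positivity), exp_mul_I,
    arg_cos_add_sin_mul_I ⟨by linarith, by linarith [Real.pi_pos]⟩]

/-- For every `γ ∈ (0, 2π)`, the limit `lim_{M→∞} ∑_{m=1}^M (e^{imγ} - e^{-imγ})/m`
exists and equals `-2πi · Res_{z=0} [e^{iγz} / (z (e^{2πiz} - 1))]`. -/
theorem statement3 (γ : ℝ) (hγ₀ : 0 < γ) (hγ₁ : γ < 2 * Real.pi) (R : ℂ)
    (hR : IsResidueAt (fun z : ℂ =>
      Complex.exp (Complex.I * γ * z) /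
        (z * (Complex.exp (2 * Real.pi * Complex.I * z) - 1))) 0 R) :
    Tendsto (fun M : ℕ =>
        ∑ m ∈ Finset.Icc 1 M,
          (Complex.exp (Complex.I * (m : ℂ) * γ) -
            Complex.exp (-(Complex.I * (m : ℂ) * γ))) / (m : ℂ))
      atTop (nhds (-(2 * Real.pi * Complex.I) * R)) := by
  have hu : exp (γ * I) ≠ 1 :=
    exp_ne_one_of_norm_lt (by simp [hγ₀.ne']) (by simpa [abs_of_pos hγ₀])
  have hsum := tendsto_sum_Icc_pow_sub_conj_pow_div (norm_exp_ofReal_mul_I γ).le hu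
  rw [arg_one_sub_exp_mul_I hγ₀ hγ₁] at hsum
  convert hsum using 2
  · refine sum_congr rfl fun m _ ↦ ?_
    rw [← exp_conj, ← exp_nat_mul, ← exp_nat_mul]
    simp only [map_mul, conj_ofReal, conj_I]
    ring_nf
  · rw [hR.eq_of_exp_div_mul_exp_sub_one]
    push_cast
    field_simp
end

section
/- Fix an integer k ≥ 1 and a real number γ ∈ (0, 2π), and set h(z) = e^{iγz} / (z^k (e^{2πiz} − 1)). Then the integral of h over the horizontal segment {x + im : −(m+1/2) ≤ x ≤ m+1/2} (at height y = m) tends to 0 as the positive integer m tends to infinity. -/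
/-!
On the line `Im z = m ≥ 1` the numerator has modulus `e^{-γm}`, while `|z^k| ≥ 1` and
`|e^{2πiz} - 1| ≥ 1 - e^{-2π}`. The integral over a segment of length `2m + 1` is therefore
`O(m e^{-γm})`, which tends to `0` because `γ > 0`.
-/

open Complex Filter Real

lemma norm_cexp_I_mul_ofReal_mul (a : ℝ) (z : ℂ) :
    ‖cexp (I * a * z)‖ = Real.exp (-(a * z.im)) := by
  rw [norm_exp]
  simp [mul_re, mul_im]

lemma one_sub_exp_neg_two_pi_le_norm_cexp_sub_one {z : ℂ} (hz : 1 ≤ z.im) :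
    1 - Real.exp (-(2 * π)) ≤ ‖cexp (2 * π * I * z) - 1‖ := by
  have hsmall : ‖cexp (2 * π * I * z)‖ ≤ Real.exp (-(2 * π)) := by
    rw [show 2 * π * I * z = I * ((2 * π : ℝ) : ℂ) * z by push_cast; ring,
      norm_cexp_I_mul_ofReal_mul, Real.exp_le_exp]
    nlinarith [pi_pos]
  calc 1 - Real.exp (-(2 * π)) ≤ ‖(1 : ℂ)‖ - ‖cexp (2 * π * I * z)‖ := by
        rw [norm_one]; linarith
    _ ≤ ‖cexp (2 * π * I * z) - 1‖ := by
        rw [norm_sub_rev]; exact norm_sub_norm_le _ _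

lemma one_sub_exp_neg_two_pi_pos : 0 < 1 - Real.exp (-(2 * π)) := by
  rw [sub_pos, Real.exp_lt_one_iff]
  linarith [pi_pos]

lemma norm_cexp_div_pow_mul_cexp_sub_one_le (k : ℕ) (γ : ℝ) {z : ℂ} (hz : 1 ≤ z.im) :
    ‖cexp (I * γ * z) / (z ^ k * (cexp (2 * π * I * z) - 1))‖
      ≤ Real.exp (-(γ * z.im)) / (1 - Real.exp (-(2 * π))) := by
  have hpow : 1 ≤ ‖z ^ k‖ := by
    rw [norm_pow]
    exact one_le_pow₀ (hz.trans (im_le_norm z))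
  rw [norm_div, norm_mul, norm_cexp_I_mul_ofReal_mul]
  gcongr
  · exact one_sub_exp_neg_two_pi_pos
  · calc 1 - Real.exp (-(2 * π)) = 1 * (1 - Real.exp (-(2 * π))) := (one_mul _).symm
      _ ≤ ‖z ^ k‖ * ‖cexp (2 * π * I * z) - 1‖ :=
        mul_le_mul hpow (one_sub_exp_neg_two_pi_le_norm_cexp_sub_one hz)
          one_sub_exp_neg_two_pi_pos.le (zero_le_one.trans hpow)

lemma norm_integral_horizontal_segment_le (k : ℕ) (γ : ℝ) {a y : ℝ} (ha : 0 ≤ a) (hy : 1 ≤ y) :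
    ‖∫ x in -a..a, cexp (I * γ * (x + I * y)) /
        ((x + I * y) ^ k * (cexp (2 * π * I * (x + I * y)) - 1))‖
      ≤ Real.exp (-(γ * y)) / (1 - Real.exp (-(2 * π))) * (2 * a) := by
  have hbound := intervalIntegral.norm_integral_le_of_norm_le_const (a := -a) (b := a)
    (C := Real.exp (-(γ * y)) / (1 - Real.exp (-(2 * π)))) (f := fun x : ℝ =>
      cexp (I * γ * (x + I * y)) / ((x + I * y) ^ k * (cexp (2 * π * I * (x + I * y)) - 1)))
    fun x _ ↦ by
      simpa using norm_cexp_div_pow_mul_cexp_sub_one_le k γ (z := x + I * y) (by simpa using hy)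
  rwa [sub_neg_eq_add, ← two_mul, abs_of_nonneg (by positivity)] at hbound

lemma tendsto_two_mul_add_one_mul_exp_neg_mul_atTop {γ : ℝ} (hγ : 0 < γ) :
    Tendsto (fun m : ℕ ↦ (2 * m + 1) * Real.exp (-(γ * m))) atTop (nhds 0) := by
  have hr : Real.exp (-γ) < 1 := Real.exp_lt_one_iff.2 (neg_lt_zero.2 hγ)
  have hgeom := tendsto_pow_atTop_nhds_zero_of_lt_one (Real.exp_pos _).le hr
  have hlin := tendsto_self_mul_const_pow_of_lt_one (Real.exp_pos _).le hr
  convert (hlin.const_mul 2).add hgeom using 1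
  · funext m
    rw [← Real.exp_nat_mul]
    ring_nf
  · simp

theorem statement6_general (k : ℕ)
    (γ : ℝ) (hγ₀ : 0 < γ)
    (h : ℂ → ℂ)
    (hh : ∀ z : ℂ, h z = Complex.exp (Complex.I * γ * z) /
      (z ^ k * (Complex.exp (2 * Real.pi * Complex.I * z) - 1))) :
    Tendsto (fun m : ℕ =>
        ∫ x in -((m : ℝ) + 1/2)..((m : ℝ) + 1/2), h ((x : ℂ) + Complex.I * (m : ℂ)))
      atTop (nhds 0) := by
  obtain rfl : h = _ := funext hh
  have hlim := (tendsto_two_mul_add_one_mul_exp_neg_mul_atTop hγ₀).div_const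
    (1 - Real.exp (-(2 * Real.pi)))
  rw [zero_div] at hlim
  refine squeeze_zero_norm' ?_ hlim
  filter_upwards [eventually_ge_atTop 1] with m hm
  have hbound := norm_integral_horizontal_segment_le k γ (a := m + 1 / 2) (y := m)
    (by positivity) (by exact_mod_cast hm)
  calc _ ≤ _ := mod_cast hbound
    _ = _ := by ring

/-- Let `k ≥ 1`, `γ ∈ (0, 2π)` and `h(z) = e^{iγz}/(z^k (e^{2πiz} - 1))`. The integral
of `h` over the horizontal segment `{x + im : -(m+1/2) ≤ x ≤ m+1/2}` at height `y = m`
tends to `0` as the positive integer `m` tends to infinity. -/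
theorem statement6 (k : ℕ) (hk : 1 ≤ k)
    (γ : ℝ) (hγ₀ : 0 < γ) (hγ₁ : γ < 2 * Real.pi)
    (h : ℂ → ℂ)
    (hh : ∀ z : ℂ, h z = Complex.exp (Complex.I * γ * z) /
      (z ^ k * (Complex.exp (2 * Real.pi * Complex.I * z) - 1))) :
    Tendsto (fun m : ℕ =>
        ∫ x in -((m : ℝ) + 1/2)..((m : ℝ) + 1/2), h ((x : ℂ) + Complex.I * (m : ℂ)))
      atTop (nhds 0) :=
  statement6_general k γ hγ₀ h hh
end

section
/- Fix an integer k ≥ 1 and a real number γ ∈ (0, 2π), and set h(z) = e^{iγz} / (z^k (e^{2πiz} − 1)). Then the integral of h over the horizontal segment {x − im : −(m+1/2) ≤ x ≤ m+1/2} (at height y = −m) tends to 0 as the positive integer m tends to infinity. -/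
/-!
On the line `Im z = -t` the numerator has modulus `e^{γt}`, the factor `e^{2πiz} - 1` has modulus
at least `e^{2πt} - 1 ≥ e^{2πt}/2` once `t ≥ 1`, and `|z|^k ≥ t^k ≥ 1`. So the integrand is at most
`2e^{-(2π-γ)t}`, and the integral over a segment of length `2m+1` is `O(m e^{-(2π-γ)m})`.
-/

open Complex Filter Topology

section HorizontalLine

variable (x : ℝ) {t : ℝ}

lemma norm_exp_I_mul_mul_sub_I_mul (a : ℝ) :
    ‖exp (I * a * ((x : ℂ) - I * t))‖ = Real.exp (a * t) := by
  rw [norm_exp]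
  congr 1
  simp [mul_re, mul_im]

lemma le_norm_sub_I_mul (ht : 0 ≤ t) : t ≤ ‖(x : ℂ) - I * t‖ := by
  simpa [abs_of_nonneg ht] using abs_im_le_norm ((x : ℂ) - I * t)

lemma half_exp_le_norm_exp_two_pi_I_mul_sub_one (ht : 1 ≤ t) :
    Real.exp (2 * Real.pi * t) / 2 ≤ ‖exp (2 * Real.pi * I * ((x : ℂ) - I * t)) - 1‖ := by
  have two_le_exp : 2 ≤ Real.exp (2 * Real.pi * t) := by
    have : 1 ≤ 2 * Real.pi * t := by nlinarith [Real.pi_gt_three]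
    linarith [Real.add_one_le_exp (2 * Real.pi * t)]
  have norm_exp_eq : ‖exp (2 * Real.pi * I * ((x : ℂ) - I * t))‖ = Real.exp (2 * Real.pi * t) := by
    rw [← norm_exp_I_mul_mul_sub_I_mul x (2 * Real.pi)]
    push_cast
    ring_nf
  calc Real.exp (2 * Real.pi * t) / 2
      ≤ ‖exp (2 * Real.pi * I * ((x : ℂ) - I * t))‖ - ‖(1 : ℂ)‖ := by
        rw [norm_exp_eq, norm_one]; linarith
    _ ≤ _ := norm_sub_norm_le _ _

lemma norm_exp_div_pow_mul_exp_sub_one_le (k : ℕ) (γ : ℝ) (ht : 1 ≤ t) :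
    ‖exp (I * γ * ((x : ℂ) - I * t)) /
        (((x : ℂ) - I * t) ^ k * (exp (2 * Real.pi * I * ((x : ℂ) - I * t)) - 1))‖ ≤
      2 * Real.exp (-(2 * Real.pi - γ) * t) := by
  have one_le_pow : 1 ≤ ‖(x : ℂ) - I * t‖ ^ k :=
    one_le_pow₀ (ht.trans (le_norm_sub_I_mul x (by linarith)))
  have denom_ge : Real.exp (2 * Real.pi * t) / 2 ≤
      ‖(x : ℂ) - I * t‖ ^ k * ‖exp (2 * Real.pi * I * ((x : ℂ) - I * t)) - 1‖ :=
    one_mul (Real.exp (2 * Real.pi * t) / 2) ▸ mul_le_mul one_le_pow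
      (half_exp_le_norm_exp_two_pi_I_mul_sub_one x ht) (by positivity) (by positivity)
  rw [norm_div, norm_mul, norm_pow, norm_exp_I_mul_mul_sub_I_mul]
  calc _ ≤ Real.exp (γ * t) / (Real.exp (2 * Real.pi * t) / 2) :=
        div_le_div_of_nonneg_left (Real.exp_pos _).le (by positivity) denom_ge
    _ = 2 * Real.exp (-(2 * Real.pi - γ) * t) := by
        rw [div_div_eq_mul_div, mul_comm, mul_div_assoc, ← Real.exp_sub]
        ring_nf

end HorizontalLine

theorem statement7_general (k : ℕ)
    (γ : ℝ) (hγ₁ : γ < 2 * Real.pi)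
    (h : ℂ → ℂ)
    (hh : ∀ z : ℂ, h z = Complex.exp (Complex.I * γ * z) /
      (z ^ k * (Complex.exp (2 * Real.pi * Complex.I * z) - 1))) :
    Tendsto (fun m : ℕ =>
        ∫ x in -((m : ℝ) + 1/2)..((m : ℝ) + 1/2), h ((x : ℂ) - Complex.I * (m : ℂ)))
      atTop (nhds 0) := by
  have decay : Tendsto (fun m : ℕ => 6 * ((m : ℝ) * Real.exp (-(2 * Real.pi - γ) * m)))
      atTop (𝓝 0) := by
    simpa using ((tendsto_rpow_mul_exp_neg_mul_atTop_nhds_zero 1 _ (sub_pos.2 hγ₁)).comp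
      tendsto_natCast_atTop_atTop).const_mul 6
  refine squeeze_zero_norm' ?_ decay
  filter_upwards [eventually_ge_atTop 1] with m hm
  have hm : (1 : ℝ) ≤ m := by exact_mod_cast hm
  have integrand_le (x : ℝ) : ‖h ((x : ℂ) - I * (m : ℂ))‖ ≤
      2 * Real.exp (-(2 * Real.pi - γ) * m) := by
    simpa only [hh, ofReal_natCast] using norm_exp_div_pow_mul_exp_sub_one_le x k γ hm
  calc _ ≤ 2 * Real.exp (-(2 * Real.pi - γ) * m) * |(m + 1 / 2 : ℝ) - -(m + 1 / 2)| :=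
        intervalIntegral.norm_integral_le_of_norm_le_const fun x _ => integrand_le x
    _ ≤ _ := by
      rw [abs_of_nonneg (by linarith)]
      nlinarith [Real.exp_pos (-(2 * Real.pi - γ) * m)]

/-- Let `k ≥ 1`, `γ ∈ (0, 2π)` and `h(z) = e^{iγz}/(z^k (e^{2πiz} - 1))`. The integral
of `h` over the horizontal segment `{x - im : -(m+1/2) ≤ x ≤ m+1/2}` at height `y = -m`
tends to `0` as the positive integer `m` tends to infinity. -/
theorem statement7 (k : ℕ) (hk : 1 ≤ k)
    (γ : ℝ) (hγ₀ : 0 < γ) (hγ₁ : γ < 2 * Real.pi)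
    (h : ℂ → ℂ)
    (hh : ∀ z : ℂ, h z = Complex.exp (Complex.I * γ * z) /
      (z ^ k * (Complex.exp (2 * Real.pi * Complex.I * z) - 1))) :
    Tendsto (fun m : ℕ =>
        ∫ x in -((m : ℝ) + 1/2)..((m : ℝ) + 1/2), h ((x : ℂ) - Complex.I * (m : ℂ)))
      atTop (nhds 0) :=
  statement7_general k γ hγ₁ h hh
end

section
/- Fix an integer k ≥ 1 and a real number γ ∈ (0, 2π), and set h(z) = e^{iγz} / (z^k (e^{2πiz} − 1)). Then the integral of h over the vertical segment {(m+1/2) + iy : −m ≤ y ≤ m} tends to 0 as the positive integer m tends to infinity. -/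
/-!
On the line `Re z = n + 1/2` we have `e^{2πiz} = -e^{-2πy}`, so
`|h(z)| = e^{-γy} / (|z|^k (1 + e^{-2πy})) ≤ min(e^{-γy}, e^{(2π-γ)y}) / (n + 1/2)`.
For `0 < γ < 2π` the profile `min(e^{-γy}, e^{(2π-γ)y})` has total integral at most
`1/γ + 1/(2π-γ)`, hence the integral over the segment is `O(1/n)`.
-/

open Complex Filter Real

lemma integral_exp_neg_mul_le_inv {a : ℝ} (ha : 0 < a) (M : ℝ) :
    ∫ y in (0 : ℝ)..M, Real.exp (-a * y) ≤ 1 / a := by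
  rw [intervalIntegral.integral_comp_mul_left Real.exp (neg_ne_zero.2 ha.ne'), integral_exp,
    smul_eq_mul, mul_zero, Real.exp_zero, inv_neg, neg_mul, ← mul_neg, neg_sub, one_div]
  exact mul_le_of_le_one_right (inv_pos.2 ha).le (sub_le_self _ (Real.exp_pos _).le)

lemma integral_min_exp_le {a b : ℝ} (ha : 0 < a) (hb : 0 < b) {M : ℝ} (hM : 0 ≤ M) :
    ∫ y in -M..M, min (Real.exp (-a * y)) (Real.exp (b * y)) ≤ 1 / a + 1 / b := by
  have hint : ∀ u v : ℝ, IntervalIntegrable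
      (fun y => min (Real.exp (-a * y)) (Real.exp (b * y))) MeasureTheory.volume u v :=
    fun u v => (by fun_prop : Continuous _).intervalIntegrable u v
  have hleft : ∫ y in -M..0, min (Real.exp (-a * y)) (Real.exp (b * y)) ≤ 1 / b :=
    calc ∫ y in -M..0, min (Real.exp (-a * y)) (Real.exp (b * y))
        ≤ ∫ y in -M..0, Real.exp (b * y) :=
          intervalIntegral.integral_mono_on (by linarith) (hint _ _)
            ((by fun_prop : Continuous _).intervalIntegrable _ _) fun _ _ => min_le_right _ _
      _ = ∫ y in (0 : ℝ)..M, Real.exp (-b * y) := by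
          simpa [neg_mul, mul_neg] using
            (intervalIntegral.integral_comp_neg (a := 0) (b := M)
              (fun y => Real.exp (b * y))).symm
      _ ≤ 1 / b := integral_exp_neg_mul_le_inv hb M
  have hright : ∫ y in (0 : ℝ)..M, min (Real.exp (-a * y)) (Real.exp (b * y)) ≤ 1 / a :=
    calc ∫ y in (0 : ℝ)..M, min (Real.exp (-a * y)) (Real.exp (b * y))
        ≤ ∫ y in (0 : ℝ)..M, Real.exp (-a * y) :=
          intervalIntegral.integral_mono_on hM (hint _ _)
            ((by fun_prop : Continuous _).intervalIntegrable _ _) fun _ _ => min_le_left _ _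
      _ ≤ 1 / a := integral_exp_neg_mul_le_inv ha M
  rw [← intervalIntegral.integral_add_adjacent_intervals (hint _ _) (hint _ _), add_comm (1 / a)]
  exact add_le_add hleft hright

lemma exp_two_pi_I_mul_half_int_add (n : ℤ) (y : ℝ) :
    Complex.exp (2 * π * I * (((n + 1 / 2 : ℝ) : ℂ) + I * y)) =
      -(Real.exp (-(2 * π * y)) : ℂ) := by
  have harg : 2 * π * I * (((n + 1 / 2 : ℝ) : ℂ) + I * y)
      = n * (2 * π * I) + π * I + ((-(2 * π * y) : ℝ) : ℂ) := by
    push_cast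
    ring_nf
    rw [I_sq]
    ring
  rw [harg, Complex.exp_add, Complex.exp_add, exp_int_mul_two_pi_mul_I, exp_pi_mul_I,
    ofReal_exp]
  ring

noncomputable def summationKernel (k : ℕ) (γ : ℝ) (z : ℂ) : ℂ :=
  Complex.exp (I * γ * z) / (z ^ k * (Complex.exp (2 * π * I * z) - 1))

lemma exp_neg_mul_div_exp_add_one_le (a b y : ℝ) :
    Real.exp (-a * y) / (Real.exp (-(b * y)) + 1) ≤
      min (Real.exp (-a * y)) (Real.exp ((b - a) * y)) := by
  have hE := Real.exp_pos (-(b * y))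
  refine le_min (div_le_self (Real.exp_pos _).le (by linarith)) ?_
  calc Real.exp (-a * y) / (Real.exp (-(b * y)) + 1)
      ≤ Real.exp (-a * y) / Real.exp (-(b * y)) :=
        div_le_div_of_nonneg_left (Real.exp_pos _).le hE (by linarith)
    _ = Real.exp ((b - a) * y) := by rw [← Real.exp_sub]; ring_nf

lemma norm_summationKernel_half_int_add_le {k : ℕ} (hk : 1 ≤ k) (γ : ℝ) {n : ℕ}
    (hn : 1 ≤ n) (y : ℝ) :
    ‖summationKernel k γ (((n + 1 / 2 : ℝ) : ℂ) + I * y)‖ ≤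
      min (Real.exp (-γ * y)) (Real.exp ((2 * π - γ) * y)) / (n + 1 / 2) := by
  have hc : (1 : ℝ) ≤ n + 1 / 2 := by
    have : (1 : ℝ) ≤ n := by exact_mod_cast hn
    linarith
  set c : ℝ := n + 1 / 2
  set z : ℂ := c + I * y
  have hnum : ‖Complex.exp (I * γ * z)‖ = Real.exp (-γ * y) := by
    rw [Complex.norm_exp]; congr 1; simp [z]
  have hden : ‖Complex.exp (2 * π * I * z) - 1‖ = Real.exp (-(2 * π * y)) + 1 := by
    have hexp := exp_two_pi_I_mul_half_int_add n y
    rw [Int.cast_natCast] at hexp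
    rw [hexp, ← neg_add', norm_neg, ← ofReal_one, ← ofReal_add, norm_real, Real.norm_eq_abs,
      abs_of_pos (by positivity)]
  have hcz : c ≤ ‖z‖ := by simpa [z, abs_of_pos (by linarith : 0 < c)] using abs_re_le_norm z
  have hzk : c ≤ ‖z‖ ^ k := hcz.trans (le_self_pow₀ (hc.trans hcz) (by omega))
  rw [summationKernel, norm_div, norm_mul, norm_pow, hnum, hden, div_mul_eq_div_div_swap]
  calc Real.exp (-γ * y) / (Real.exp (-(2 * π * y)) + 1) / ‖z‖ ^ k
      ≤ Real.exp (-γ * y) / (Real.exp (-(2 * π * y)) + 1) / c :=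
        div_le_div_of_nonneg_left (by positivity) (by linarith) hzk
    _ ≤ min (Real.exp (-γ * y)) (Real.exp ((2 * π - γ) * y)) / c :=
        div_le_div_of_nonneg_right (exp_neg_mul_div_exp_add_one_le γ (2 * π) y) (by linarith)

lemma norm_integral_summationKernel_half_int_segment_le {k : ℕ} (hk : 1 ≤ k) {γ : ℝ}
    (hγ₀ : 0 < γ) (hγ₁ : γ < 2 * π) {n : ℕ} (hn : 1 ≤ n) :
    ‖∫ y in -(n : ℝ)..n, summationKernel k γ (((n + 1 / 2 : ℝ) : ℂ) + I * y)‖ ≤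
      (1 / γ + 1 / (2 * π - γ)) / (n + 1 / 2) := by
  have hprofile : ∀ u v : ℝ, IntervalIntegrable
      (fun y => min (Real.exp (-γ * y)) (Real.exp ((2 * π - γ) * y)) / (n + 1 / 2))
      MeasureTheory.volume u v :=
    fun u v => (by fun_prop : Continuous _).intervalIntegrable u v
  calc _ ≤ ∫ y in -(n : ℝ)..n,
          min (Real.exp (-γ * y)) (Real.exp ((2 * π - γ) * y)) / (n + 1 / 2) :=
        intervalIntegral.norm_integral_le_of_norm_le (by simp) (.of_forall fun y _ =>
          norm_summationKernel_half_int_add_le hk γ hn y) (hprofile _ _)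
    _ ≤ (1 / γ + 1 / (2 * π - γ)) / (n + 1 / 2) := by
        rw [intervalIntegral.integral_div]
        gcongr
        exact integral_min_exp_le hγ₀ (by linarith) (Nat.cast_nonneg n)

/-- Let `k ≥ 1`, `γ ∈ (0, 2π)` and `h(z) = e^{iγz}/(z^k (e^{2πiz} - 1))`. The complex
line integral of `h` over the vertical segment `{(m+1/2) + iy : -m ≤ y ≤ m}` tends to
`0` as the positive integer `m` tends to infinity. -/
theorem statement8 (k : ℕ) (hk : 1 ≤ k)
    (γ : ℝ) (hγ₀ : 0 < γ) (hγ₁ : γ < 2 * Real.pi)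
    (h : ℂ → ℂ)
    (hh : ∀ z : ℂ, h z = Complex.exp (Complex.I * γ * z) /
      (z ^ k * (Complex.exp (2 * Real.pi * Complex.I * z) - 1))) :
    Tendsto (fun m : ℕ =>
        Complex.I * ∫ y in -(m : ℝ)..(m : ℝ),
          h ((((m : ℝ) + 1/2 : ℝ) : ℂ) + Complex.I * (y : ℂ)))
      atTop (nhds 0) := by
  obtain rfl : h = summationKernel k γ := funext hh
  refine squeeze_zero_norm' (a := fun m : ℕ => (1 / γ + 1 / (2 * π - γ)) / (m + 1 / 2)) ?_ ?_
  · filter_upwards [eventually_ge_atTop 1] with m hm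
    rw [norm_mul, norm_I, one_mul]
    exact norm_integral_summationKernel_half_int_segment_le hk hγ₀ hγ₁ hm
  · exact tendsto_const_nhds.div_atTop
      (tendsto_atTop_add_const_right _ _ tendsto_natCast_atTop_atTop)
end
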